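/- Assume the data is special real and let Ŝ^N_I be as follows: Ŝ^N_i := blockdiag(Ŝ_i, −Ŝ_i), Ŝ^N_{i'} := [[0, −Ŝ_i],[−Ŝ_i, 0]]. Then the exterior covariant derivative of Ŝ^N with respect to the Levi-Civita connection of G vanishes: (D^N_I Ŝ^N)_J − (D^N_J Ŝ^N)_I = 0 for all I, J, where (D^N_I Ŝ^N)_J := ∂_I Ŝ^N_J + [Γ_I, Ŝ^N_J] − Ŝ^N_{Γ_I e_J} (with Γ_i := blockdiag(Ŝ_i, Ŝ_i), Γ_{i'} := [[0, −Ŝ_i],[Ŝ_i, 0]], and Ŝ^N_ξ := Σ_I ξ^I Ŝ^N_I for ξ ∈ ℝ^{2n}). -/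

import Mathlib

open Matrix

noncomputable section

/-- Partial derivative of a function on `ℝⁿ` in the `i`-th coordinate direction. -/
def pd {n : ℕ} (i : Fin n) (f : (Fin n → ℝ) → ℝ) (x : Fin n → ℝ) : ℝ :=
  fderiv ℝ f x (Pi.single i 1)

/-- Entrywise partial derivative of a matrix-valued map on `ℝⁿ`. -/
def mpd {n : ℕ} (i : Fin n) (F : (Fin n → ℝ) → Matrix (Fin n) (Fin n) ℝ)
    (x : Fin n → ℝ) : Matrix (Fin n) (Fin n) ℝ :=
  Matrix.of fun a b => pd i (fun y => F y a b) x

/-- Hessian metric data on a set `U ⊆ ℝⁿ`: a smooth symmetric invertible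
matrix-valued map whose cubic form `S_{ijk} = ∂_k g_{ij}` is totally symmetric. -/
structure HessianData (n : ℕ) (U : Set (Fin n → ℝ))
    (g : (Fin n → ℝ) → Matrix (Fin n) (Fin n) ℝ) : Prop where
  isOpen : IsOpen U
  smooth : ∀ i j, ContDiffOn ℝ (⊤ : ℕ∞) (fun x => g x i j) U
  symm : ∀ x ∈ U, (g x).IsSymm
  invertible : ∀ x ∈ U, IsUnit (g x).det
  cubic_symm : ∀ x ∈ U, ∀ i j k : Fin n,
    pd k (fun y => g y i j) x = pd j (fun y => g y i k) x

/-- `Ŝᵢ(x) = ½ g(x)⁻¹ ∂ᵢ g(x)`. -/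
def Shat {n : ℕ} (g : (Fin n → ℝ) → Matrix (Fin n) (Fin n) ℝ)
    (i : Fin n) (x : Fin n → ℝ) : Matrix (Fin n) (Fin n) ℝ :=
  (2⁻¹ : ℝ) • ((g x)⁻¹ * mpd i g x)

/-- Special real data on `U ⊆ ℝⁿ`: a symmetric invertible matrix-valued map of the
affine form `g_{ij}(x) = b_{ij} + Σ_k a_{ijk} x^k` with `b` symmetric and `a`
totally symmetric. -/
structure SpecialRealData (n : ℕ) (U : Set (Fin n → ℝ))
    (g : (Fin n → ℝ) → Matrix (Fin n) (Fin n) ℝ) : Prop where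
  isOpen : IsOpen U
  smooth : ∀ i j, ContDiffOn ℝ (⊤ : ℕ∞) (fun x => g x i j) U
  symm : ∀ x ∈ U, (g x).IsSymm
  invertible : ∀ x ∈ U, IsUnit (g x).det
  affine : ∃ (b : Matrix (Fin n) (Fin n) ℝ) (a : Fin n → Fin n → Fin n → ℝ),
    b.IsSymm ∧ (∀ i j k, a i j k = a j i k) ∧ (∀ i j k, a i j k = a i k j) ∧
    ∀ (x : Fin n → ℝ) (i j : Fin n), g x i j = b i j + ∑ k, a i j k * x k

/-- The `I`-th standard basis vector of `ℝ^{2n} = ℝⁿ × ℝⁿ`, indexed by `Fin n ⊕ Fin n`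
(horizontal indices `inl i`, vertical indices `inr i'`). -/
def eN {n : ℕ} : Fin n ⊕ Fin n → (Fin n → ℝ) × (Fin n → ℝ)
  | .inl i => (Pi.single i 1, 0)
  | .inr i => (0, Pi.single i 1)

/-- Partial derivative on `N ⊆ ℝ^{2n}` in the `I`-th coordinate direction. -/
def pdN {n : ℕ} (I : Fin n ⊕ Fin n) (f : (Fin n → ℝ) × (Fin n → ℝ) → ℝ)
    (p : (Fin n → ℝ) × (Fin n → ℝ)) : ℝ :=
  fderiv ℝ f p (eN I)

/-- Entrywise partial derivative of a matrix-valued map on `N ⊆ ℝ^{2n}`. -/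
def mpdN {n : ℕ} (I : Fin n ⊕ Fin n)
    (F : (Fin n → ℝ) × (Fin n → ℝ) → Matrix (Fin n ⊕ Fin n) (Fin n ⊕ Fin n) ℝ)
    (p : (Fin n → ℝ) × (Fin n → ℝ)) : Matrix (Fin n ⊕ Fin n) (Fin n ⊕ Fin n) ℝ :=
  Matrix.of fun A B => pdN I (fun q => F q A B) p

/-- The metric `G(x,u) = blockdiag(g(x), g(x))` on `N = U × ℝⁿ`. -/
def GN {n : ℕ} (g : (Fin n → ℝ) → Matrix (Fin n) (Fin n) ℝ)
    (p : (Fin n → ℝ) × (Fin n → ℝ)) : Matrix (Fin n ⊕ Fin n) (Fin n ⊕ Fin n) ℝ :=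
  Matrix.fromBlocks (g p.1) 0 0 (g p.1)

/-- Curvature `R_{IJ} = ∂_I Γ_J − ∂_J Γ_I + Γ_I Γ_J − Γ_J Γ_I` of a connection on `N`
given by Christoffel symbols `Γ`. -/
def Riem {n : ℕ}
    (Γ : Fin n ⊕ Fin n → (Fin n → ℝ) × (Fin n → ℝ) → Matrix (Fin n ⊕ Fin n) (Fin n ⊕ Fin n) ℝ)
    (I J : Fin n ⊕ Fin n) (p : (Fin n → ℝ) × (Fin n → ℝ)) :
    Matrix (Fin n ⊕ Fin n) (Fin n ⊕ Fin n) ℝ :=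
  mpdN I (Γ J) p - mpdN J (Γ I) p + Γ I p * Γ J p - Γ J p * Γ I p

/-- Christoffel symbols of the Levi-Civita connection of `G` on `N`:
`Γ_i = blockdiag(Ŝᵢ, Ŝᵢ)`, `Γ_{i'} = [[0, −Ŝᵢ],[Ŝᵢ, 0]]`. -/
def GammaLC {n : ℕ} (g : (Fin n → ℝ) → Matrix (Fin n) (Fin n) ℝ) :
    Fin n ⊕ Fin n → (Fin n → ℝ) × (Fin n → ℝ) → Matrix (Fin n ⊕ Fin n) (Fin n ⊕ Fin n) ℝ
  | .inl i => fun p => Matrix.fromBlocks (Shat g i p.1) 0 0 (Shat g i p.1)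
  | .inr i => fun p => Matrix.fromBlocks 0 (-(Shat g i p.1)) (Shat g i p.1) 0

/-- The tensor `Ŝ^N`: `Ŝ^N_i = blockdiag(Ŝᵢ, −Ŝᵢ)`, `Ŝ^N_{i'} = [[0,−Ŝᵢ],[−Ŝᵢ,0]]`. -/
def ShatN {n : ℕ} (g : (Fin n → ℝ) → Matrix (Fin n) (Fin n) ℝ) :
    Fin n ⊕ Fin n → (Fin n → ℝ) × (Fin n → ℝ) → Matrix (Fin n ⊕ Fin n) (Fin n ⊕ Fin n) ℝ
  | .inl i => fun p => Matrix.fromBlocks (Shat g i p.1) 0 0 (-(Shat g i p.1))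
  | .inr i => fun p => Matrix.fromBlocks 0 (-(Shat g i p.1)) (-(Shat g i p.1)) 0

/-- The covariant derivative `(D^N_I Ŝ^N)_J = ∂_I Ŝ^N_J + [Γ_I, Ŝ^N_J] − Ŝ^N_{Γ_I e_J}`
with respect to the Levi-Civita connection of `G`. -/
def DcovShatN {n : ℕ} (g : (Fin n → ℝ) → Matrix (Fin n) (Fin n) ℝ)
    (I J : Fin n ⊕ Fin n) (p : (Fin n → ℝ) × (Fin n → ℝ)) :
    Matrix (Fin n ⊕ Fin n) (Fin n ⊕ Fin n) ℝ :=
  mpdN I (ShatN g J) p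
    + (GammaLC g I p * ShatN g J p - ShatN g J p * GammaLC g I p)
    - ∑ K : Fin n ⊕ Fin n, (GammaLC g I p *ᵥ Pi.single J 1) K • ShatN g K p


/-! ### Auxiliary lemmas -/

section Aux

variable {n : ℕ}

lemma pd_neg (i : Fin n) (f : (Fin n → ℝ) → ℝ) (x : Fin n → ℝ) :
    pd i (fun y => -(f y)) x = -(pd i f x) := by
  simp [pd, fderiv_neg]

lemma det_diffAt {m : ℕ} {F : (Fin n → ℝ) → Matrix (Fin m) (Fin m) ℝ} {x : Fin n → ℝ}
    (h : ∀ a b, DifferentiableAt ℝ (fun y => F y a b) x) :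
    DifferentiableAt ℝ (fun y => (F y).det) x := by
  simp only [Matrix.det_apply']
  apply DifferentiableAt.fun_sum
  intro σ _
  apply DifferentiableAt.const_mul
  exact (HasFDerivAt.finset_prod (fun i _ => (h (σ i) i).hasFDerivAt)).differentiableAt

lemma inv_entry_diffAt {F : (Fin n → ℝ) → Matrix (Fin n) (Fin n) ℝ} {x : Fin n → ℝ}
    (h : ∀ a b, DifferentiableAt ℝ (fun y => F y a b) x)
    (hdet : (F x).det ≠ 0) (a b : Fin n) :
    DifferentiableAt ℝ (fun y => (F y)⁻¹ a b) x := by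
  have key : ∀ y, (F y)⁻¹ a b = ((F y).det)⁻¹ * (F y).adjugate a b := by
    intro y
    rw [Matrix.inv_def, Matrix.smul_apply, Ring.inverse_eq_inv', smul_eq_mul]
  simp only [key]
  apply DifferentiableAt.mul
  · exact (det_diffAt h).inv hdet
  · have hadj : ∀ y, (F y).adjugate a b = ((F y).updateRow b (Pi.single a 1)).det :=
      fun y => Matrix.adjugate_apply _ _ _
    simp only [hadj]
    apply det_diffAt
    intro c d
    by_cases hc : c = b
    · subst hc
      simp only [Matrix.updateRow_apply, if_pos rfl]
      exact differentiableAt_const _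
    · simp only [Matrix.updateRow_apply, if_neg hc]
      exact h c d

lemma mpd_congr_nhds {F H : (Fin n → ℝ) → Matrix (Fin n) (Fin n) ℝ} {x : Fin n → ℝ}
    (hFH : F =ᶠ[nhds x] H) (i : Fin n) : mpd i F x = mpd i H x := by
  ext a b
  simp only [mpd, Matrix.of_apply, pd]
  rw [Filter.EventuallyEq.fderiv_eq (hFH.mono fun y hy => by rw [hy])]

lemma mpd_mul {F G : (Fin n → ℝ) → Matrix (Fin n) (Fin n) ℝ} {x : Fin n → ℝ}
    (hF : ∀ a b, DifferentiableAt ℝ (fun y => F y a b) x)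
    (hG : ∀ a b, DifferentiableAt ℝ (fun y => G y a b) x) (i : Fin n) :
    mpd i (fun y => F y * G y) x = mpd i F x * G x + F x * mpd i G x := by
  ext a b
  simp only [mpd, Matrix.of_apply, pd, Matrix.mul_apply, Matrix.add_apply]
  rw [fderiv_fun_sum (fun c _ => (hF a c).fun_mul (hG c b))]
  simp only [ContinuousLinearMap.coe_sum', Finset.sum_apply]
  rw [← Finset.sum_add_distrib]
  refine Finset.sum_congr rfl fun c _ => ?_
  rw [fderiv_fun_mul (hF a c) (hG c b)]
  simp only [ContinuousLinearMap.add_apply, ContinuousLinearMap.coe_smul', Pi.smul_apply,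
    smul_eq_mul]
  ring

lemma mpd_mul_const {F : (Fin n → ℝ) → Matrix (Fin n) (Fin n) ℝ} {x : Fin n → ℝ}
    (hF : ∀ a b, DifferentiableAt ℝ (fun y => F y a b) x)
    (C : Matrix (Fin n) (Fin n) ℝ) (i : Fin n) :
    mpd i (fun y => F y * C) x = mpd i F x * C := by
  ext a b
  simp only [mpd, Matrix.of_apply, pd, Matrix.mul_apply]
  rw [fderiv_fun_sum (fun c _ => (hF a c).mul_const _)]
  simp only [ContinuousLinearMap.coe_sum', Finset.sum_apply]
  refine Finset.sum_congr rfl fun c _ => ?_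
  rw [fderiv_mul_const (hF a c)]
  simp only [ContinuousLinearMap.coe_smul', Pi.smul_apply, smul_eq_mul]
  ring

lemma mpd_smul {F : (Fin n → ℝ) → Matrix (Fin n) (Fin n) ℝ} {x : Fin n → ℝ}
    (hF : ∀ a b, DifferentiableAt ℝ (fun y => F y a b) x) (c : ℝ) (i : Fin n) :
    mpd i (fun y => c • F y) x = c • mpd i F x := by
  ext a b
  simp only [mpd, Matrix.of_apply, pd, Matrix.smul_apply, smul_eq_mul]
  rw [fderiv_const_mul (hF a b)]
  simp

lemma affine_hasFDerivAt (bM : Matrix (Fin n) (Fin n) ℝ) (a : Fin n → Fin n → Fin n → ℝ)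
    (i j : Fin n) (x : Fin n → ℝ) :
    HasFDerivAt (fun y : Fin n → ℝ => bM i j + ∑ k, a i j k * y k)
      (∑ k, a i j k • (ContinuousLinearMap.proj k : (Fin n → ℝ) →L[ℝ] ℝ)) x := by
  have h1 : HasFDerivAt (fun y : Fin n → ℝ => ∑ k, a i j k * y k)
      (∑ k, a i j k • (ContinuousLinearMap.proj k : (Fin n → ℝ) →L[ℝ] ℝ)) x := by
    apply HasFDerivAt.fun_sum
    intro k _
    exact ((ContinuousLinearMap.proj k : (Fin n → ℝ) →L[ℝ] ℝ).hasFDerivAt).const_mul (a i j k)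
  exact h1.const_add (bM i j)

lemma pdN_inl {f : (Fin n → ℝ) → ℝ} {p : (Fin n → ℝ) × (Fin n → ℝ)}
    (hf : DifferentiableAt ℝ f p.1) (i : Fin n) :
    pdN (Sum.inl i) (fun q => f q.1) p = pd i f p.1 := by
  have h : HasFDerivAt (fun q : (Fin n → ℝ) × (Fin n → ℝ) => f q.1)
      ((fderiv ℝ f p.1).comp (ContinuousLinearMap.fst ℝ (Fin n → ℝ) (Fin n → ℝ))) p :=
    hf.hasFDerivAt.comp p hasFDerivAt_fst
  rw [pdN, h.fderiv]
  simp [eN, pd]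

lemma pdN_inr {f : (Fin n → ℝ) → ℝ} {p : (Fin n → ℝ) × (Fin n → ℝ)}
    (hf : DifferentiableAt ℝ f p.1) (i : Fin n) :
    pdN (Sum.inr i) (fun q => f q.1) p = 0 := by
  have h : HasFDerivAt (fun q : (Fin n → ℝ) × (Fin n → ℝ) => f q.1)
      ((fderiv ℝ f p.1).comp (ContinuousLinearMap.fst ℝ (Fin n → ℝ) (Fin n → ℝ))) p :=
    hf.hasFDerivAt.comp p hasFDerivAt_fst
  rw [pdN, h.fderiv]
  simp [eN]

lemma pdN_const (I : Fin n ⊕ Fin n) (c : ℝ) (p : (Fin n → ℝ) × (Fin n → ℝ)) :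
    pdN I (fun _ => c) p = 0 := by
  simp [pdN]

variable {g : (Fin n → ℝ) → Matrix (Fin n) (Fin n) ℝ} {p : (Fin n → ℝ) × (Fin n → ℝ)}

lemma mpdN_ll (hd : ∀ (j : Fin n) a b, DifferentiableAt ℝ (fun y => Shat g j y a b) p.1)
    (i j : Fin n) :
    mpdN (Sum.inl i) (ShatN g (Sum.inl j)) p =
      fromBlocks (mpd i (Shat g j) p.1) 0 0 (-(mpd i (Shat g j) p.1)) := by
  ext A B
  rcases A with a | a <;> rcases B with b | b <;>
    simp only [mpdN, Matrix.of_apply, ShatN, Matrix.fromBlocks_apply₁₁,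
      Matrix.fromBlocks_apply₁₂, Matrix.fromBlocks_apply₂₁, Matrix.fromBlocks_apply₂₂,
      Matrix.zero_apply, Matrix.neg_apply, mpd]
  · exact pdN_inl (hd j a b) i
  · exact pdN_const _ _ _
  · exact pdN_const _ _ _
  · rw [pdN_inl ((hd j a b).fun_neg) i, pd_neg]

lemma mpdN_lr (hd : ∀ (j : Fin n) a b, DifferentiableAt ℝ (fun y => Shat g j y a b) p.1)
    (i j : Fin n) :
    mpdN (Sum.inl i) (ShatN g (Sum.inr j)) p =
      fromBlocks 0 (-(mpd i (Shat g j) p.1)) (-(mpd i (Shat g j) p.1)) 0 := by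
  ext A B
  rcases A with a | a <;> rcases B with b | b <;>
    simp only [mpdN, Matrix.of_apply, ShatN, Matrix.fromBlocks_apply₁₁,
      Matrix.fromBlocks_apply₁₂, Matrix.fromBlocks_apply₂₁, Matrix.fromBlocks_apply₂₂,
      Matrix.zero_apply, Matrix.neg_apply, mpd]
  · exact pdN_const _ _ _
  · rw [pdN_inl ((hd j a b).fun_neg) i, pd_neg]
  · rw [pdN_inl ((hd j a b).fun_neg) i, pd_neg]
  · exact pdN_const _ _ _

lemma mpdN_r (hd : ∀ (j : Fin n) a b, DifferentiableAt ℝ (fun y => Shat g j y a b) p.1)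
    (i : Fin n) (J : Fin n ⊕ Fin n) :
    mpdN (Sum.inr i) (ShatN g J) p = 0 := by
  rcases J with j | j <;>
  · ext A B
    rcases A with a | a <;> rcases B with b | b <;>
      simp only [mpdN, Matrix.of_apply, ShatN, Matrix.fromBlocks_apply₁₁,
        Matrix.fromBlocks_apply₁₂, Matrix.fromBlocks_apply₂₁, Matrix.fromBlocks_apply₂₂,
        Matrix.zero_apply, Matrix.neg_apply] <;>
      first
        | exact pdN_const _ _ _
        | exact pdN_inr (hd j a b) i
        | exact pdN_inr ((hd j a b).neg) i

lemma fromBlocks_sub' (A B C D A' B' C' D' : Matrix (Fin n) (Fin n) ℝ) :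
    fromBlocks A B C D - fromBlocks A' B' C' D' =
      fromBlocks (A - A') (B - B') (C - C') (D - D') := by
  simp only [sub_eq_add_neg, ← Matrix.fromBlocks_neg, ← Matrix.fromBlocks_add]

lemma fromBlocks_congr {A B C D A' B' C' D' : Matrix (Fin n) (Fin n) ℝ}
    (h1 : A = A') (h2 : B = B') (h3 : C = C') (h4 : D = D') :
    fromBlocks A B C D = fromBlocks A' B' C' D' := by
  rw [h1, h2, h3, h4]

end Aux

/-- for special real data, the exterior covariant derivative of `Ŝ^N`
with respect to the Levi-Civita connection of `G` vanishes:
`(D^N_I Ŝ^N)_J − (D^N_J Ŝ^N)_I = 0`. -/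
theorem stmt_16 {n : ℕ} (hn : 1 ≤ n) (U : Set (Fin n → ℝ))
    (g : (Fin n → ℝ) → Matrix (Fin n) (Fin n) ℝ)
    (hg : SpecialRealData n U g) :
    ∀ p ∈ U ×ˢ (Set.univ : Set (Fin n → ℝ)), ∀ I J : Fin n ⊕ Fin n,
      DcovShatN g I J p - DcovShatN g J I p = 0 := by
  obtain ⟨bM, a, hbs, ha1, ha2, haff⟩ := hg.affine
  set A : Fin n → Matrix (Fin n) (Fin n) ℝ := fun k => Matrix.of fun i j => a i j k with hA
  have hgfun : ∀ i j : Fin n, (fun y => g y i j) = fun y => bM i j + ∑ k, a i j k * y k :=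
    fun i j => funext fun y => haff y i j
  have hgd : ∀ (i j : Fin n) (x : Fin n → ℝ), HasFDerivAt (fun y => g y i j)
      (∑ k, a i j k • (ContinuousLinearMap.proj k : (Fin n → ℝ) →L[ℝ] ℝ)) x := by
    intro i j x
    rw [hgfun i j]
    exact affine_hasFDerivAt bM a i j x
  have gdiff : ∀ (i j : Fin n) (x : Fin n → ℝ), DifferentiableAt ℝ (fun y => g y i j) x :=
    fun i j x => (hgd i j x).differentiableAt
  have mpdg : ∀ (k : Fin n) (x : Fin n → ℝ), mpd k g x = A k := by
    intro k x
    ext i j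
    simp only [mpd, Matrix.of_apply, pd, (hgd i j x).fderiv, hA]
    simp [Pi.single_apply, mul_ite]
  have hSfun : ∀ i : Fin n, Shat g i = fun y => (2⁻¹ : ℝ) • ((g y)⁻¹ * A i) := by
    intro i
    funext y
    rw [Shat, mpdg]
  rintro p ⟨hx, -⟩ I J
  have hunit : IsUnit (g p.1).det := hg.invertible p.1 hx
  have hdet0 : (g p.1).det ≠ 0 := hunit.ne_zero
  have hinvdiff : ∀ a b : Fin n, DifferentiableAt ℝ (fun y => (g y)⁻¹ a b) p.1 :=
    inv_entry_diffAt (fun a b => gdiff a b p.1) hdet0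
  have hinvAdiff : ∀ (i : Fin n) (a b : Fin n),
      DifferentiableAt ℝ (fun y => ((g y)⁻¹ * A i) a b) p.1 := by
    intro i a b
    simp only [Matrix.mul_apply]
    exact DifferentiableAt.fun_sum fun c _ => (hinvdiff a c).mul_const _
  have hSdiff : ∀ (i : Fin n) (a b : Fin n),
      DifferentiableAt ℝ (fun y => Shat g i y a b) p.1 := by
    intro i a b
    simp only [hSfun i, Matrix.smul_apply, smul_eq_mul]
    exact (hinvAdiff i a b).const_mul _
  have hinvD : ∀ k : Fin n,
      mpd k (fun y => (g y)⁻¹) p.1 = -((g p.1)⁻¹ * A k * (g p.1)⁻¹) := by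
    intro k
    have hev : (fun y => (g y)⁻¹ * g y) =ᶠ[nhds p.1]
        fun _ => (1 : Matrix (Fin n) (Fin n) ℝ) := by
      have hc : ContinuousAt (fun y => (g y).det) p.1 :=
        (det_diffAt (fun a b => gdiff a b p.1)).continuousAt
      filter_upwards [hc.eventually_ne hdet0] with y hy
      exact Matrix.nonsing_inv_mul _ (isUnit_iff_ne_zero.mpr hy)
    have h0 : mpd k (fun y => (g y)⁻¹ * g y) p.1 = 0 := by
      rw [mpd_congr_nhds hev]
      ext a b
      simp [mpd, pd]
    rw [mpd_mul hinvdiff (fun a b => gdiff a b p.1) k, mpdg] at h0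
    have h1 : mpd k (fun y => (g y)⁻¹) p.1 * g p.1 = -((g p.1)⁻¹ * A k) :=
      eq_neg_of_add_eq_zero_left h0
    calc mpd k (fun y => (g y)⁻¹) p.1
        = mpd k (fun y => (g y)⁻¹) p.1 * (g p.1 * (g p.1)⁻¹) := by
          rw [Matrix.mul_nonsing_inv _ hunit, mul_one]
      _ = (mpd k (fun y => (g y)⁻¹) p.1 * g p.1) * (g p.1)⁻¹ := by rw [mul_assoc]
      _ = -((g p.1)⁻¹ * A k * (g p.1)⁻¹) := by rw [h1, neg_mul]
  have dS : ∀ i j : Fin n,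
      mpd j (Shat g i) p.1 = (-2 : ℝ) • (Shat g j p.1 * Shat g i p.1) := by
    intro i j
    have e1 : Shat g j p.1 = (2⁻¹ : ℝ) • ((g p.1)⁻¹ * A j) := by rw [hSfun j]
    have e2 : Shat g i p.1 = (2⁻¹ : ℝ) • ((g p.1)⁻¹ * A i) := by rw [hSfun i]
    rw [e1, e2, hSfun i, mpd_smul (hinvAdiff i) _ j, mpd_mul_const hinvdiff (A i) j,
      hinvD j]
    rw [neg_mul, smul_neg, ← neg_smul, smul_mul_assoc, mul_smul_comm, smul_smul, smul_smul,
      mul_assoc ((g p.1)⁻¹ * A j) ((g p.1)⁻¹) (A i)]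
    norm_num
  have hSsym : ∀ i j k : Fin n, Shat g i p.1 k j = Shat g j p.1 k i := by
    intro i j k
    have e1 : Shat g i p.1 = (2⁻¹ : ℝ) • ((g p.1)⁻¹ * A i) := by rw [hSfun i]
    have e2 : Shat g j p.1 = (2⁻¹ : ℝ) • ((g p.1)⁻¹ * A j) := by rw [hSfun j]
    rw [e1, e2]
    simp only [Matrix.smul_apply, Matrix.mul_apply, smul_eq_mul, hA, Matrix.of_apply]
    congr 1
    exact Finset.sum_congr rfl fun c _ => by rw [ha2 c j i]
  have hGsym : ∀ I' J' K : Fin n ⊕ Fin n, GammaLC g I' p K J' = GammaLC g J' p K I' := by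
    intro I' J' K
    rcases I' with i | i <;> rcases J' with j | j <;> rcases K with k | k <;>
      simp only [GammaLC, Matrix.fromBlocks_apply₁₁, Matrix.fromBlocks_apply₁₂,
        Matrix.fromBlocks_apply₂₁, Matrix.fromBlocks_apply₂₂, Matrix.zero_apply,
        Matrix.neg_apply, neg_inj] <;>
      first
        | rfl
        | exact hSsym i j k
  have hsum : (∑ K : Fin n ⊕ Fin n, (GammaLC g I p *ᵥ Pi.single J 1) K • ShatN g K p)
      = ∑ K : Fin n ⊕ Fin n, (GammaLC g J p *ᵥ Pi.single I 1) K • ShatN g K p := by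
    refine Finset.sum_congr rfl fun K _ => ?_
    simp only [Matrix.mulVec_single, mul_one, MulOpposite.op_one, one_smul, Matrix.col_apply]
    rw [hGsym I J K]
  have key : mpdN I (ShatN g J) p
        + (GammaLC g I p * ShatN g J p - ShatN g J p * GammaLC g I p)
      = mpdN J (ShatN g I) p
        + (GammaLC g J p * ShatN g I p - ShatN g I p * GammaLC g J p) := by
    rcases I with i | i <;> rcases J with j | j
    · rw [mpdN_ll hSdiff i j, mpdN_ll hSdiff j i, dS j i, dS i j]
      simp only [GammaLC, ShatN, Matrix.fromBlocks_multiply, Matrix.fromBlocks_add,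
        fromBlocks_sub', Matrix.mul_zero, Matrix.zero_mul, add_zero, zero_add,
        Matrix.mul_neg, Matrix.neg_mul, neg_neg, sub_zero, zero_sub, neg_zero]
      exact fromBlocks_congr (by module) (by module) (by module) (by module)
    · rw [mpdN_lr hSdiff i j, mpdN_r hSdiff j (Sum.inl i), dS j i]
      simp only [GammaLC, ShatN, Matrix.fromBlocks_multiply, Matrix.fromBlocks_add,
        fromBlocks_sub', Matrix.mul_zero, Matrix.zero_mul, add_zero, zero_add,
        Matrix.mul_neg, Matrix.neg_mul, neg_neg, sub_zero, zero_sub, neg_zero]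
      exact fromBlocks_congr (by module) (by module) (by module) (by module)
    · rw [mpdN_r hSdiff i (Sum.inl j), mpdN_lr hSdiff j i, dS i j]
      simp only [GammaLC, ShatN, Matrix.fromBlocks_multiply, Matrix.fromBlocks_add,
        fromBlocks_sub', Matrix.mul_zero, Matrix.zero_mul, add_zero, zero_add,
        Matrix.mul_neg, Matrix.neg_mul, neg_neg, sub_zero, zero_sub, neg_zero]
      exact fromBlocks_congr (by module) (by module) (by module) (by module)
    · rw [mpdN_r hSdiff i (Sum.inr j), mpdN_r hSdiff j (Sum.inr i)]
      simp only [GammaLC, ShatN, Matrix.fromBlocks_multiply, Matrix.fromBlocks_add,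
        fromBlocks_sub', Matrix.mul_zero, Matrix.zero_mul, add_zero, zero_add,
        Matrix.mul_neg, Matrix.neg_mul, neg_neg, sub_zero, zero_sub, neg_zero]
      exact fromBlocks_congr (by module) (by module) (by module) (by module)
  rw [DcovShatN, DcovShatN, hsum, key, sub_self]
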